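/- Let q ≡ 1 (mod 4) be a prime power, i ∈ F_q with i² = -1, G = PSL(2,q) acting on P = (F_q²\{0})/⟨i⟩, and H the stabilizer of the point [(1,0)]. Then H has exactly (q-1)/2 orbits on P: the (q-1)/4 singleton orbits {[(a,0)]} with a ≠ 0, and the (q-1)/4 orbits {[(y,b)] : y ∈ F_q} for b ≠ 0. -/

import Mathlib

open Matrix MulAction Pointwise

abbrev SL2 (F : Type) [Field F] := Matrix.SpecialLinearGroup (Fin 2) F

abbrev PSL2 (F : Type) [Field F] := SL2 F ⧸ Subgroup.center (SL2 F)

/-- Nonzero vectors of `F²`. -/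
def Vec (F : Type) [Field F] := {v : Fin 2 → F // v ≠ 0}

/-- Two nonzero vectors are related if they differ by multiplication by a power of `i`. -/
def vrel (F : Type) [Field F] (i : F) (v w : Vec F) : Prop :=
  ∃ n : ℕ, (w.1 : Fin 2 → F) = i ^ n • v.1

/-- The point set `P = (F² \ {0})/⟨i⟩`. -/
def Pts (F : Type) [Field F] (i : F) := Quot (vrel F i)

/-- The class of a nonzero vector in `P`. -/
def mkPt (F : Type) [Field F] (i : F) (v : Fin 2 → F) (hv : v ≠ 0) : Pts F i :=
  Quot.mk _ ⟨v, hv⟩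

lemma vec_fst_ne_zero {F : Type} [Field F] (b : F) : ![(1 : F), b] ≠ 0 := by
  intro h
  simpa using congrFun h 0

lemma vec_snd_ne_zero {F : Type} [Field F] (a : F) : ![a, (1 : F)] ≠ 0 := by
  intro h
  simpa using congrFun h 1

/-- `SL(2,q)` acts on nonzero vectors. -/
def slVecSMul {F : Type} [Field F] (A : SL2 F) (v : Vec F) : Vec F :=
  ⟨(A : Matrix (Fin 2) (Fin 2) F) *ᵥ v.1, by
    intro h
    apply v.2
    have h2 : ((A⁻¹ : SL2 F) : Matrix (Fin 2) (Fin 2) F) *ᵥ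
        ((A : Matrix (Fin 2) (Fin 2) F) *ᵥ v.1) = 0 := by rw [h, Matrix.mulVec_zero]
    rwa [Matrix.mulVec_mulVec, ← Matrix.SpecialLinearGroup.coe_mul, inv_mul_cancel,
      Matrix.SpecialLinearGroup.coe_one, Matrix.one_mulVec] at h2⟩

instance (F : Type) [Field F] (i : F) : SMul (SL2 F) (Pts F i) :=
  ⟨fun A => Quot.map (slVecSMul A) (by
    rintro v w ⟨n, hn⟩
    exact ⟨n, by simp [slVecSMul, hn, Matrix.mulVec_smul]⟩)⟩

instance (F : Type) [Field F] (i : F) : MulAction (SL2 F) (Pts F i) where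
  one_smul p := by
    induction p using Quot.ind with | _ v => ?_
    show Quot.mk _ (slVecSMul 1 v) = Quot.mk _ v
    congr 1
    apply Subtype.ext
    simp [slVecSMul]
  mul_smul A B p := by
    induction p using Quot.ind with | _ v => ?_
    show Quot.mk _ (slVecSMul (A * B) v) = Quot.mk _ (slVecSMul A (slVecSMul B v))
    congr 1
    apply Subtype.ext
    simp only [slVecSMul, Matrix.SpecialLinearGroup.coe_mul, Matrix.mulVec_mulVec]

/-- The stabilizer in `PSL(2,q)` of a point of `P`, i.e. the image in the quotient
`PSL(2,q) = SL(2,q)/center` of the stabilizer in `SL(2,q)`. -/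
def pslPtStab (F : Type) [Field F] (i : F) (p : Pts F i) : Subgroup (PSL2 F) :=
  (MulAction.stabilizer (SL2 F) p).map (QuotientGroup.mk' (Subgroup.center (SL2 F)))

/-- The setwise stabilizer in `PSL(2,q)` of a set of points of `P`. -/
def pslSetStab (F : Type) [Field F] (i : F) (s : Set (Pts F i)) : Subgroup (PSL2 F) :=
  (MulAction.stabilizer (SL2 F) s).map (QuotientGroup.mk' (Subgroup.center (SL2 F)))

/-!
An element of `H` is upper triangular with diagonal `(iⁿ, i⁻ⁿ)`. Since scaling by `iⁿ` is
invisible in `P`, it fixes every `[(a,0)]` and maps `[(x,b)]` to a point `[(y,b)]` of the same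
horizontal line, while the shears `[[1,x],[0,1]] ∈ H` move transitively along that line. Both
kinds of orbits are thus indexed by `Fˣ/⟨i⟩`, which has `(q-1)/4` elements as `i` has order 4.
-/

lemma Subgroup.card_range_eq_index {G β : Type*} [Group G] (H : Subgroup G) (f : G → β)
    (hf : ∀ u v, f u = f v ↔ u⁻¹ * v ∈ H) : Nat.card (Set.range f) = H.index := by
  let g : G ⧸ H → β :=
    Quotient.lift f fun u v h => (hf u v).2 (QuotientGroup.leftRel_apply.1 h)
  have hg : Function.Injective g := by
    rintro ⟨u⟩ ⟨v⟩ h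
    exact Quotient.sound (QuotientGroup.leftRel_apply.2 ((hf u v).1 h))
  have hrange : Set.range g = Set.range f :=
    Set.range_quotient_lift (s := QuotientGroup.leftRel H) _
  rw [← hrange, Nat.card_range_of_injective hg, Subgroup.index_eq_card]

section

variable {F : Type} [Field F] {i : F}

lemma pow_four_eq_one_of_sq_eq_neg_one (hi : i ^ 2 = -1) : i ^ 4 = 1 := by
  rw [show 4 = 2 * 2 from rfl, pow_mul, hi, neg_one_sq]

lemma ne_zero_of_sq_eq_neg_one (hi : i ^ 2 = -1) : i ≠ 0 := by
  rintro rfl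
  norm_num at hi

lemma vrel_equivalence (hi : i ^ 2 = -1) : Equivalence (vrel F i) where
  refl _ := ⟨0, by simp⟩
  symm := by
    rintro v w ⟨n, hn⟩
    refine ⟨3 * n, ?_⟩
    rw [hn, smul_smul, ← pow_add, show 3 * n + n = 4 * n by ring, pow_mul,
      pow_four_eq_one_of_sq_eq_neg_one hi, one_pow, one_smul]
  trans := by
    rintro u v w ⟨n, hn⟩ ⟨m, hm⟩
    exact ⟨m + n, by rw [hm, hn, smul_smul, ← pow_add]⟩

lemma mkPt_eq_mkPt_iff (hi : i ^ 2 = -1) {v w : Fin 2 → F} (hv : v ≠ 0) (hw : w ≠ 0) :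
    mkPt F i v hv = mkPt F i w hw ↔ ∃ n : ℕ, w = i ^ n • v :=
  Quot.eq.trans (vrel_equivalence hi).eqvGen_iff

lemma mkPt_pair_eq_iff (hi : i ^ 2 = -1) {a b c d : F} (h : ![a, b] ≠ 0) (h' : ![c, d] ≠ 0) :
    mkPt F i ![a, b] h = mkPt F i ![c, d] h' ↔ ∃ n : ℕ, c = i ^ n * a ∧ d = i ^ n * b := by
  simp [mkPt_eq_mkPt_iff hi]

lemma exists_eq_mkPt_pair (x : Pts F i) :
    ∃ (a b : F) (h : ![a, b] ≠ 0), x = mkPt F i ![a, b] h := by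
  obtain ⟨⟨v, hv⟩, rfl⟩ := Quot.exists_rep x
  have hv_eta : v = ![v 0, v 1] := by
    ext j
    fin_cases j <;> rfl
  exact ⟨v 0, v 1, hv_eta ▸ hv, congrArg (Quot.mk _) (Subtype.ext hv_eta)⟩

lemma smul_mkPt (A : SL2 F) {v : Fin 2 → F} (hv : v ≠ 0) :
    A • mkPt F i v hv =
      mkPt F i ((A : Matrix (Fin 2) (Fin 2) F) *ᵥ v) (slVecSMul A ⟨v, hv⟩).2 :=
  rfl

lemma smul_mkPt_pair (A : SL2 F) {a b : F} (h : ![a, b] ≠ 0) :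
    A • mkPt F i ![a, b] h = mkPt F i ![A 0 0 * a + A 0 1 * b, A 1 0 * a + A 1 1 * b]
      (by convert (slVecSMul A ⟨_, h⟩).2 using 2; simp [slVecSMul]) := by
  rw [smul_mkPt]
  congr 1
  simp

variable (F i) in
abbrev basePtStab : Subgroup (SL2 F) :=
  stabilizer (SL2 F) (mkPt F i ![1, 0] (vec_fst_ne_zero 0))

lemma mem_basePtStab_iff (hi : i ^ 2 = -1) (A : SL2 F) :
    A ∈ basePtStab F i ↔ ∃ n : ℕ, A 0 0 = i ^ n ∧ A 1 0 = 0 := by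
  rw [mem_stabilizer_iff, smul_mkPt, eq_comm]
  simp [mkPt_pair_eq_iff hi]

def shear (x : F) : SL2 F := ⟨!![1, x; 0, 1], by simp⟩

lemma shear_mem_basePtStab (hi : i ^ 2 = -1) (x : F) : shear x ∈ basePtStab F i :=
  (mem_basePtStab_iff hi _).2 ⟨0, by simp [shear], by simp [shear]⟩

lemma orbit_mkPt_pair_zero (hi : i ^ 2 = -1) {a : F} (hv : ![a, 0] ≠ 0) :
    orbit (basePtStab F i) (mkPt F i ![a, 0] hv) = {mkPt F i ![a, 0] hv} := by
  refine Set.eq_singleton_iff_unique_mem.2 ⟨mem_orbit_self _, ?_⟩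
  rintro _ ⟨⟨A, hA⟩, rfl⟩
  obtain ⟨n, h00, h10⟩ := (mem_basePtStab_iff hi A).1 hA
  change A • mkPt F i ![a, 0] hv = _
  rw [smul_mkPt_pair]
  refine ((mkPt_pair_eq_iff hi _ _).2 ⟨n, ?_, ?_⟩).symm <;> simp [h00, h10]

lemma orbit_mkPt_of_snd_ne_zero (hi : i ^ 2 = -1) {a b : F} (hb : b ≠ 0) (hv : ![a, b] ≠ 0)
    (hline : ∀ y : F, ![y, b] ≠ 0) :
    orbit (basePtStab F i) (mkPt F i ![a, b] hv) =
      {x | ∃ y : F, x = mkPt F i ![y, b] (hline y)} := by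
  ext x
  constructor
  · rintro ⟨⟨A, hA⟩, rfl⟩
    obtain ⟨n, h00, h10⟩ := (mem_basePtStab_iff hi A).1 hA
    have hdet := Matrix.SpecialLinearGroup.det_coe A
    rw [Matrix.det_fin_two, h00, h10] at hdet
    change A • mkPt F i ![a, b] hv ∈ _
    rw [smul_mkPt_pair]
    refine ⟨i ^ n * (i ^ n * a + A 0 1 * b), (mkPt_pair_eq_iff hi _ _).2 ⟨n, ?_, ?_⟩⟩
    · simp [h00]
    · simp only [h10]
      linear_combination -b * hdet
  · rintro ⟨y, rfl⟩
    refine ⟨⟨shear ((y - a) / b), shear_mem_basePtStab hi _⟩, ?_⟩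
    change shear ((y - a) / b) • mkPt F i ![a, b] hv = _
    rw [smul_mkPt_pair]
    refine (mkPt_pair_eq_iff hi _ _).2 ⟨0, ?_, ?_⟩
    · simp [shear, div_mul_cancel₀ _ hb]
    · simp [shear]

lemma orderOf_mk0_eq_four (hi : i ^ 2 = -1) (hF : ringChar F ≠ 2) :
    orderOf (Units.mk0 i (ne_zero_of_sq_eq_neg_one hi)) = 4 := by
  refine orderOf_eq_prime_pow (p := 2) (n := 1) ?_ ?_
  · rw [Units.ext_iff]
    simpa [hi] using Ring.neg_one_ne_one_of_char_ne_two hF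
  · rw [Units.ext_iff]
    simpa using pow_four_eq_one_of_sq_eq_neg_one hi

lemma index_zpowers_mk0 [Finite F] (hi : i ^ 2 = -1) (hF : ringChar F ≠ 2) :
    (Subgroup.zpowers (Units.mk0 i (ne_zero_of_sq_eq_neg_one hi))).index =
      (Nat.card F - 1) / 4 := by
  have h := Subgroup.card_mul_index (Subgroup.zpowers (Units.mk0 i (ne_zero_of_sq_eq_neg_one hi)))
  rw [Nat.card_zpowers, orderOf_mk0_eq_four hi hF, Nat.card_units] at h
  omega

lemma inv_mul_mem_zpowers_mk0_iff [Finite F] (hi : i ^ 2 = -1) (u v : Fˣ) :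
    u⁻¹ * v ∈ Subgroup.zpowers (Units.mk0 i (ne_zero_of_sq_eq_neg_one hi)) ↔
      ∃ n : ℕ, (v : F) = i ^ n * u := by
  rw [← mem_powers_iff_mem_zpowers, Submonoid.mem_powers_iff]
  refine exists_congr fun n => ?_
  rw [eq_inv_mul_iff_mul_eq, Units.ext_iff, eq_comm, mul_comm]
  simp

variable (F i) in
def axisOrbits : Set (Set (Pts F i)) :=
  {s | ∃ a : F, ∃ ha : a ≠ 0,
    s = orbit (basePtStab F i) (mkPt F i ![a, 0] (fun h => ha (by simpa using congrFun h 0)))}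

variable (F i) in
def lineOrbits : Set (Set (Pts F i)) :=
  {s | ∃ a b : F, ∃ hb : b ≠ 0,
    s = orbit (basePtStab F i) (mkPt F i ![a, b] (fun h => hb (by simpa using congrFun h 1)))}

lemma axisOrbits_eq_range :
    axisOrbits F i = Set.range fun u : Fˣ => orbit (basePtStab F i)
      (mkPt F i ![(u : F), 0] (fun h => u.ne_zero (by simpa using congrFun h 0))) := by
  ext s
  constructor
  · rintro ⟨a, ha, rfl⟩
    exact ⟨Units.mk0 a ha, rfl⟩
  · rintro ⟨u, rfl⟩
    exact ⟨u, u.ne_zero, rfl⟩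

lemma lineOrbits_eq_range (hi : i ^ 2 = -1) :
    lineOrbits F i = Set.range fun u : Fˣ => orbit (basePtStab F i)
      (mkPt F i ![0, (u : F)] (fun h => u.ne_zero (by simpa using congrFun h 1))) := by
  ext s
  constructor
  · rintro ⟨a, b, hb, rfl⟩
    refine ⟨Units.mk0 b hb, orbit_eq_iff.2 ?_⟩
    rw [orbit_mkPt_of_snd_ne_zero hi hb _ fun y h => hb (by simpa using congrFun h 1)]
    exact ⟨0, rfl⟩
  · rintro ⟨u, rfl⟩
    exact ⟨0, u, u.ne_zero, rfl⟩

lemma card_axisOrbits [Finite F] (hi : i ^ 2 = -1) (hF : ringChar F ≠ 2) :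
    Nat.card (axisOrbits F i) = (Nat.card F - 1) / 4 := by
  rw [axisOrbits_eq_range, Subgroup.card_range_eq_index _ _ fun u v => ?_, index_zpowers_mk0 hi hF]
  rw [orbit_eq_iff, orbit_mkPt_pair_zero hi, Set.mem_singleton_iff, mkPt_pair_eq_iff hi,
    inv_mul_mem_zpowers_mk0_iff hi]
  simp

lemma card_lineOrbits [Finite F] (hi : i ^ 2 = -1) (hF : ringChar F ≠ 2) :
    Nat.card (lineOrbits F i) = (Nat.card F - 1) / 4 := by
  rw [lineOrbits_eq_range hi, Subgroup.card_range_eq_index _ _ fun u v => ?_,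
    index_zpowers_mk0 hi hF]
  rw [orbit_eq_iff,
    orbit_mkPt_of_snd_ne_zero hi v.ne_zero _ fun y h => v.ne_zero (by simpa using congrFun h 1),
    inv_mul_mem_zpowers_mk0_iff hi]
  simp [mkPt_pair_eq_iff hi]

lemma disjoint_axisOrbits_lineOrbits (hi : i ^ 2 = -1) :
    Disjoint (axisOrbits F i) (lineOrbits F i) := by
  rw [Set.disjoint_left]
  rintro _ ⟨a, ha, rfl⟩ ⟨a', b, hb, h⟩
  have h_mem := orbit_eq_iff.1 h.symm
  rw [orbit_mkPt_pair_zero hi, Set.mem_singleton_iff, mkPt_pair_eq_iff hi] at h_mem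
  simp [hb, ne_zero_of_sq_eq_neg_one hi] at h_mem

lemma orbits_eq_union :
    {s | ∃ x : Pts F i, s = orbit (basePtStab F i) x} = axisOrbits F i ∪ lineOrbits F i := by
  ext s
  constructor
  · rintro ⟨x, rfl⟩
    obtain ⟨a, b, h, rfl⟩ := exists_eq_mkPt_pair x
    by_cases hb : b = 0
    · subst hb
      exact Or.inl ⟨a, fun ha => h (by simp [ha]), rfl⟩
    · exact Or.inr ⟨a, b, hb, rfl⟩
  · rintro (⟨a, ha, rfl⟩ | ⟨a, b, hb, rfl⟩) <;> exact ⟨_, rfl⟩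

lemma card_orbits [Finite F] (hi : i ^ 2 = -1) (hF : ringChar F ≠ 2) :
    Nat.card {s | ∃ x : Pts F i, s = orbit (basePtStab F i) x} = 2 * ((Nat.card F - 1) / 4) := by
  have h_axis_finite : (axisOrbits F i).Finite :=
    axisOrbits_eq_range (i := i) ▸ Set.finite_range _
  have h_line_finite : (lineOrbits F i).Finite := lineOrbits_eq_range hi ▸ Set.finite_range _
  rw [orbits_eq_union, Nat.card_coe_set_eq,
    Set.ncard_union_eq (disjoint_axisOrbits_lineOrbits hi) h_axis_finite h_line_finite,
    ← Nat.card_coe_set_eq, ← Nat.card_coe_set_eq, card_axisOrbits hi hF, card_lineOrbits hi hF,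
    two_mul]

end

/-- The stabilizer `H` of `[(1,0)]` has exactly `(q-1)/2` orbits on `P`: the `(q-1)/4`
singleton orbits `{[(a,0)]}` with `a ≠ 0`, and the `(q-1)/4` orbits
`{[(y,b)] : y ∈ F_q}` with `b ≠ 0`. -/
theorem stmt_6 (q : ℕ) (F : Type) [Field F] [Fintype F]
    (hcard : Fintype.card F = q) (hq : q % 4 = 1)
    (i : F) (hi : i ^ 2 = -1) :
    (∀ a : F, ∀ ha : a ≠ 0,
      MulAction.orbit (↥(MulAction.stabilizer (SL2 F) (mkPt F i ![1, 0] (vec_fst_ne_zero 0))))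
          (mkPt F i ![a, 0] (fun h => ha (by simpa using congrFun h 0))) =
        {mkPt F i ![a, 0] (fun h => ha (by simpa using congrFun h 0))}) ∧
    (∀ a b : F, ∀ hb : b ≠ 0,
      MulAction.orbit (↥(MulAction.stabilizer (SL2 F) (mkPt F i ![1, 0] (vec_fst_ne_zero 0))))
          (mkPt F i ![a, b] (fun h => hb (by simpa using congrFun h 1))) =
        {x : Pts F i | ∃ y : F, x = mkPt F i ![y, b] (fun h => hb (by simpa using congrFun h 1))}) ∧
    Nat.card {s : Set (Pts F i) | ∃ a : F, ∃ ha : a ≠ 0,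
      s = MulAction.orbit (↥(MulAction.stabilizer (SL2 F) (mkPt F i ![1, 0] (vec_fst_ne_zero 0))))
        (mkPt F i ![a, 0] (fun h => ha (by simpa using congrFun h 0)))} = (q - 1) / 4 ∧
    Nat.card {s : Set (Pts F i) | ∃ a b : F, ∃ hb : b ≠ 0,
      s = MulAction.orbit (↥(MulAction.stabilizer (SL2 F) (mkPt F i ![1, 0] (vec_fst_ne_zero 0))))
        (mkPt F i ![a, b] (fun h => hb (by simpa using congrFun h 1)))} = (q - 1) / 4 ∧
    Nat.card {s : Set (Pts F i) | ∃ x : Pts F i,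
      s = MulAction.orbit (↥(MulAction.stabilizer (SL2 F) (mkPt F i ![1, 0] (vec_fst_ne_zero 0)))) x} = (q - 1) / 2 := by
  have hF : ringChar F ≠ 2 := by
    rw [Ne, FiniteField.even_card_iff_char_two, hcard]
    omega
  have h_card : (Nat.card F - 1) / 4 = (q - 1) / 4 := by
    rw [Nat.card_eq_fintype_card, hcard]
  refine ⟨fun a ha => orbit_mkPt_pair_zero hi _, fun a b hb => orbit_mkPt_of_snd_ne_zero hi hb _ _,
    (card_axisOrbits hi hF).trans h_card, (card_lineOrbits hi hF).trans h_card, ?_⟩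
  rw [card_orbits hi hF, h_card]
  omega
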